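/- Let 𝒫 be a partition of Fin n into nonempty blocks and ψ an n-qubit state. (i) If U is a unitary on the n-qubit space which factorizes as a tensor product U = ⊗_{B∈𝒫} U_B, with each U_B a unitary acting only on the qubits of block B, then Λ_max^𝒫(U ψ) = Λ_max^𝒫(ψ). (ii) If moreover U ψ = e ⊗ ψ̃, where e is a tensor product of single-qubit unit vectors on a subset D ⊆ Fin n and ψ̃ is a state on the qubits of Fin n ∖ D, then Λ_max^𝒫(ψ) = Λ_max^{𝒫'}(ψ̃), where 𝒫' = { B ∖ D : B ∈ 𝒫, B ∖ D ≠ ∅ } is the induced partition of Fin n ∖ D. (Content of Lemma 2: disentangling qubits by unitaries acting locally inside each block does not change the geometric entanglement of blocks.) -/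

import Mathlib

open scoped BigOperators
open scoped Classical

noncomputable section

namespace GeomEnt

/-- The ℓ² inner product of two amplitude functions on qubits indexed by `ι`. -/
def qInner {ι : Type} [Fintype ι] (φ ψ : (ι → ZMod 2) → ℂ) : ℂ :=
  ∑ x : ι → ZMod 2, (starRingEnd ℂ) (φ x) * ψ x

/-- A normalized state on qubits indexed by `ι`. -/
def IsState {ι : Type} [Fintype ι] (ψ : (ι → ZMod 2) → ℂ) : Prop :=
  ∑ x : ι → ZMod 2, ‖ψ x‖ ^ 2 = 1

/-- A product state with respect to a partition `P` of the qubits into blocks: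
each block carries a unit-norm amplitude function, and the global amplitude is the
product of the block amplitudes of the restrictions. -/
def IsBlockProductState {ι : Type} [Fintype ι] [DecidableEq ι]
    (P : Finpartition (Finset.univ : Finset ι)) (Φ : (ι → ZMod 2) → ℂ) : Prop :=
  ∃ φ : (B : Finset ι) → (({ a : ι // a ∈ B } → ZMod 2) → ℂ),
    (∀ B ∈ P.parts, ∑ y : { a : ι // a ∈ B } → ZMod 2, ‖φ B y‖ ^ 2 = 1) ∧
    ∀ x, Φ x = ∏ B ∈ P.parts, φ B (fun a => x a.1)

/-- Maximal overlap with `P`-product states. -/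
def LambdaMaxP {ι : Type} [Fintype ι] [DecidableEq ι]
    (P : Finpartition (Finset.univ : Finset ι)) (ψ : (ι → ZMod 2) → ℂ) : ℝ :=
  sSup { r : ℝ | ∃ Φ, IsBlockProductState P Φ ∧ r = ‖qInner Φ ψ‖ }

/-- Geometric entanglement of blocks. -/
def EGP {ι : Type} [Fintype ι] [DecidableEq ι]
    (P : Finpartition (Finset.univ : Finset ι)) (ψ : (ι → ZMod 2) → ℂ) : ℝ :=
  - Real.logb 2 (LambdaMaxP P ψ ^ 2)

end GeomEnt

/-!
(i) A block-local unitary `U = ⊗_B U_B` maps `P`-product states to `P`-product states, and so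
does `Uᴴ = ⊗_B U_Bᴴ`. As `⟨Φ, Uψ⟩ = ⟨UᴴΦ, ψ⟩` and `⟨UΦ, Uψ⟩ = ⟨Φ, ψ⟩`, the overlaps of `Uψ` and of
`ψ` with `P`-product states are bounded by each other.

(ii) By (i) it suffices to treat `χ = e ⊗ ψt`, where `e = ⊗_B e_B` and `e_B` is the product of the
single-qubit vectors on `B ∩ D`. For a `P`-product state `Φ = ⊗_B φ_B`, `⟨Φ, χ⟩ = ⟨⟨e|Φ⟩, ψt⟩`,
and the partial inner product `⟨e|Φ⟩ = ⊗_B ⟨e_B|φ_B⟩` is a product over the blocks `B \ D` of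
factors of norm at most one (Cauchy–Schwarz); normalising them bounds `|⟨Φ, χ⟩|` by
`Λ_max^{P'}(ψt)`. Conversely, for a `P'`-product state `Φ'`, `e ⊗ Φ'` is a `P`-product state with
`⟨e ⊗ Φ', χ⟩ = ⟨Φ', ψt⟩`.
-/

open Matrix

section Cover

variable {κ β α R : Type*} [Fintype κ] (s : Finset β) (T : β → Finset κ)

def coverEquiv (hT : ∀ i, ∃! b, b ∈ s ∧ i ∈ T b) : κ ≃ Σ b : s, T b.1 where
  toFun i := ⟨⟨(hT i).exists.choose, (hT i).exists.choose_spec.1⟩,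
    ⟨i, (hT i).exists.choose_spec.2⟩⟩
  invFun σ := σ.2.1
  left_inv _ := rfl
  right_inv := by
    rintro ⟨⟨b, hb⟩, ⟨i, hi⟩⟩
    exact Sigma.subtype_ext (Subtype.ext ((hT i).unique (hT i).exists.choose_spec ⟨hb, hi⟩)) rfl

theorem prod_eq_prod_prod_of_cover (hT : ∀ i, ∃! b, b ∈ s ∧ i ∈ T b) [CommMonoid R]
    (f : κ → R) : ∏ i, f i = ∏ b ∈ s, ∏ j : T b, f j :=
  calc ∏ i, f i = ∏ σ : Σ b : s, T b.1, f σ.2 := ((coverEquiv s T hT).symm.prod_comp f).symm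
    _ = ∏ b : s, ∏ j : T b.1, f j := Fintype.prod_sigma _
    _ = ∏ b ∈ s, ∏ j : T b, f j := Finset.prod_coe_sort s fun b => ∏ j : T b, f j

theorem sum_prod_eq_prod_sum_of_cover [DecidableEq κ] (hT : ∀ i, ∃! b, b ∈ s ∧ i ∈ T b)
    [Fintype α] [CommSemiring R] (G : (b : β) → (T b → α) → R) :
    ∑ x : κ → α, ∏ b ∈ s, G b (fun j => x j) = ∏ b ∈ s, ∑ w, G b w := by
  rw [← Finset.prod_coe_sort s, Fintype.prod_sum]
  exact Fintype.sum_equiv (((coverEquiv s T hT).arrowCongr (Equiv.refl α)).trans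
    (Equiv.piCurry fun _ _ => α)) _ _ fun x => (Finset.prod_coe_sort s _).symm

end Cover

theorem Set.InjOn.exists_dependent_extend {β γ : Type*} {F : γ → Type*} [∀ c, Inhabited (F c)]
    {f : β → γ} {S : Set β} (hf : Set.InjOn f S) (θ : ∀ b, F (f b)) :
    ∃ θ' : ∀ c, F c, ∀ b ∈ S, θ' (f b) = θ b := by
  refine ⟨fun c => if h : ∃ b ∈ S, f b = c then h.choose_spec.2 ▸ θ h.choose else default,
    fun b hb => ?_⟩
  have h : ∃ b' ∈ S, f b' = f b := ⟨b, hb, rfl⟩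
  dsimp only
  rw [dif_pos h]
  obtain ⟨hmem, hfb⟩ := h.choose_spec
  have hb' : h.choose = b := hf hmem hb hfb
  exact eq_of_heq ((eqRec_heq _ _).trans (by rw [hb']))

section Vectors

variable {n : Type*} [Fintype n]

theorem ofReal_sum_norm_sq (f : n → ℂ) : ((∑ i, ‖f i‖ ^ 2 : ℝ) : ℂ) = star f ⬝ᵥ f := by
  simp [dotProduct, Complex.conj_mul']

theorem star_mulVec_dotProduct_mulVec [DecidableEq n] {U : Matrix n n ℂ}
    (hU : U ∈ unitaryGroup n ℂ) (v w : n → ℂ) : star (U *ᵥ v) ⬝ᵥ (U *ᵥ w) = star v ⬝ᵥ w := by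
  rw [star_mulVec, dotProduct_mulVec, vecMul_vecMul, ← star_eq_conjTranspose,
    mem_unitaryGroup_iff'.mp hU, vecMul_one]

theorem sum_norm_sq_mulVec [DecidableEq n] {U : Matrix n n ℂ} (hU : U ∈ unitaryGroup n ℂ)
    (f : n → ℂ) : ∑ i, ‖(U *ᵥ f) i‖ ^ 2 = ∑ i, ‖f i‖ ^ 2 := by
  exact_mod_cast (ofReal_sum_norm_sq _).trans
    ((star_mulVec_dotProduct_mulVec hU f f).trans (ofReal_sum_norm_sq f).symm)

theorem norm_le_one_of_sum_norm_sq_le_one {f : n → ℂ} (hf : ∑ i, ‖f i‖ ^ 2 ≤ 1) (i : n) :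
    ‖f i‖ ≤ 1 := by
  have : ‖f i‖ ^ 2 ≤ 1 :=
    (Finset.single_le_sum (fun j _ => sq_nonneg ‖f j‖) (Finset.mem_univ i)).trans hf
  exact (sq_le_one_iff₀ (norm_nonneg _)).mp this

theorem norm_dotProduct_sq_le (a b : n → ℂ) :
    ‖star a ⬝ᵥ b‖ ^ 2 ≤ (∑ i, ‖a i‖ ^ 2) * ∑ i, ‖b i‖ ^ 2 :=
  calc ‖star a ⬝ᵥ b‖ ^ 2 ≤ (∑ i, ‖a i‖ * ‖b i‖) ^ 2 := by
        gcongr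
        exact (norm_sum_le _ _).trans_eq (by simp)
    _ ≤ _ := Finset.sum_mul_sq_le_sq_mul_sq _ _ _

theorem sum_norm_sq_contract_le {W : Type*} [Fintype W] {a : W → ℂ}
    (ha : ∑ w, ‖a w‖ ^ 2 = 1) (F : W → n → ℂ) :
    ∑ z, ‖∑ w, star (a w) * F w z‖ ^ 2 ≤ ∑ w, ∑ z, ‖F w z‖ ^ 2 := by
  rw [Finset.sum_comm]
  gcongr with z
  simpa [ha, dotProduct] using norm_dotProduct_sq_le a (F · z)

theorem exists_sum_norm_sq_eq_one [Nonempty n] : ∃ g : n → ℂ, ∑ i, ‖g i‖ ^ 2 = 1 := by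
  obtain ⟨i₀⟩ := ‹Nonempty n›
  exact ⟨Pi.single i₀ 1, by simp [Pi.single_apply, apply_ite]⟩

theorem exists_sum_norm_sq_eq_one_and_eq_sqrt_mul [Nonempty n] (f : n → ℂ) :
    ∃ g : n → ℂ, ∑ i, ‖g i‖ ^ 2 = 1 ∧ ∀ i, f i = √(∑ j, ‖f j‖ ^ 2) * g i := by
  rcases (Finset.sum_nonneg fun j _ => sq_nonneg ‖f j‖ : 0 ≤ ∑ j, ‖f j‖ ^ 2).eq_or_lt with hS | hS
  · have hf : ∀ i, f i = 0 := fun i => by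
      simpa using (Finset.sum_eq_zero_iff_of_nonneg fun j _ => sq_nonneg ‖f j‖).mp hS.symm i
        (Finset.mem_univ i)
    obtain ⟨g, hg⟩ := exists_sum_norm_sq_eq_one (n := n)
    exact ⟨g, hg, fun i => by simp [hf]⟩
  · have hne : ((√(∑ j, ‖f j‖ ^ 2) : ℝ) : ℂ) ≠ 0 :=
      Complex.ofReal_ne_zero.mpr (Real.sqrt_pos.mpr hS).ne'
    refine ⟨fun i => f i / √(∑ j, ‖f j‖ ^ 2), ?_, fun i => (mul_div_cancel₀ _ hne).symm⟩
    simp only [norm_div, Complex.norm_real, Real.norm_of_nonneg (Real.sqrt_nonneg _), div_pow,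
      Real.sq_sqrt hS.le, ← Finset.sum_div, div_self hS.ne']

theorem sum_norm_sq_prod_eq_one {J : Type*} [Fintype J] [DecidableEq J] (ε : J → ZMod 2 → ℂ)
    (hε : ∀ j, ‖ε j 0‖ ^ 2 + ‖ε j 1‖ ^ 2 = 1) : ∑ w : J → ZMod 2, ‖∏ j, ε j (w j)‖ ^ 2 = 1 := by
  simp_rw [norm_prod, ← Finset.prod_pow]
  exact (Fintype.prod_sum fun j t => ‖ε j t‖ ^ 2).symm.trans
    (Finset.prod_eq_one fun j _ => (Fin.sum_univ_two _).trans (hε j))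

end Vectors

section Splitting

variable {ι α : Type*} [DecidableEq ι] (D : Finset ι)

def glue (u : D → α) (v : {a // a ∉ D} → α) : ι → α :=
  (Equiv.piEquivPiSubtypeProd (· ∈ D) fun _ => α).symm (u, v)

theorem restrict_glue_mem (u : D → α) (v : {a // a ∉ D} → α) :
    (fun i : D => glue D u v i) = u :=
  congrArg Prod.fst ((Equiv.piEquivPiSubtypeProd (· ∈ D) fun _ => α).apply_symm_apply (u, v))

theorem restrict_glue_notMem (u : D → α) (v : {a // a ∉ D} → α) :
    (fun i : {a // a ∉ D} => glue D u v i) = v :=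
  congrArg Prod.snd ((Equiv.piEquivPiSubtypeProd (· ∈ D) fun _ => α).apply_symm_apply (u, v))

theorem sum_eq_sum_sum_glue [Fintype ι] [Fintype α] {M : Type*} [AddCommMonoid M]
    (f : (ι → α) → M) : ∑ x, f x = ∑ u, ∑ v, f (glue D u v) :=
  (Equiv.sum_comp (Equiv.piEquivPiSubtypeProd (· ∈ D) fun _ => α).symm f).symm.trans
    (Fintype.sum_prod_type _)

def partialInner [Fintype α] (a : (D → α) → ℂ) (Φ : (ι → α) → ℂ) (v : {a // a ∉ D} → α) : ℂ :=
  ∑ u, star (a u) * Φ (glue D u v)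

theorem partialInner_mul [Fintype α] {a : (D → α) → ℂ} (ha : ∑ u, ‖a u‖ ^ 2 = 1)
    (Φ' : ({a // a ∉ D} → α) → ℂ) :
    partialInner D a (fun x => a (fun i => x i) * Φ' (fun i => x i)) = Φ' := by
  have hnorm : ∑ u, star (a u) * a u = 1 := by
    change star a ⬝ᵥ a = 1
    rw [← ofReal_sum_norm_sq, ha, Complex.ofReal_one]
  funext v
  simp only [partialInner, restrict_glue_mem, restrict_glue_notMem, ← mul_assoc, ← Finset.sum_mul,
    hnorm, one_mul]

def blockSplit (B : Finset ι) : (B → α) ≃ (B.subtype (· ∈ D) → α) × (B.subtype (· ∉ D) → α) where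
  toFun y := (fun i => y ⟨i.1.1, Finset.mem_subtype.mp i.2⟩,
    fun t => y ⟨t.1.1, Finset.mem_subtype.mp t.2⟩)
  invFun p a := if h : (a : ι) ∈ D then p.1 ⟨⟨a, h⟩, Finset.mem_subtype.mpr a.2⟩
    else p.2 ⟨⟨a, h⟩, Finset.mem_subtype.mpr a.2⟩
  left_inv y := by
    funext a
    by_cases h : (a : ι) ∈ D <;> simp [h]
  right_inv p := by
    ext i
    · simp [i.1.2]
    · simp [i.1.2]

theorem restrict_glue_eq_blockSplit_symm (B : Finset ι) (u : D → α) (v : {a // a ∉ D} → α) :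
    (fun a : B => glue D u v a) = (blockSplit D B).symm (fun i => u i, fun t => v t) := by
  funext a
  by_cases h : (a : ι) ∈ D <;> simp [glue, blockSplit, h]

theorem sum_eq_sum_sum_blockSplit_symm [Fintype α] {M : Type*} [AddCommMonoid M] (B : Finset ι)
    (f : (B → α) → M) : ∑ y, f y = ∑ w, ∑ z, f ((blockSplit D B).symm (w, z)) :=
  (Equiv.sum_comp _ f).symm.trans (Fintype.sum_prod_type _)

theorem sum_norm_sq_contract_blockSplit_le [Fintype α] {B : Finset ι} {φ : (B → α) → ℂ}
    (hφ : ∑ y, ‖φ y‖ ^ 2 = 1) {a : (B.subtype (· ∈ D) → α) → ℂ} (ha : ∑ w, ‖a w‖ ^ 2 = 1) :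
    ∑ z, ‖∑ w, star (a w) * φ ((blockSplit D B).symm (w, z))‖ ^ 2 ≤ 1 :=
  (sum_norm_sq_contract_le ha _).trans_eq
    ((sum_eq_sum_sum_blockSplit_symm D B fun y => ‖φ y‖ ^ 2).symm.trans hφ)

end Splitting

section Restriction

variable {ι : Type*} [Fintype ι] [DecidableEq ι] (P : Finpartition (Finset.univ : Finset ι))

theorem Finpartition.existsUnique_mem_subtype_parts (p : ι → Prop) [DecidablePred p]
    (i : {a // p a}) : ∃! B, B ∈ P.parts ∧ i ∈ B.subtype p := by
  simpa only [Finset.mem_subtype] using P.existsUnique_mem (Finset.mem_univ i.1)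

theorem Finpartition.injOn_subtype (p : ι → Prop) [DecidablePred p] :
    Set.InjOn (Finset.subtype p) {B | B ∈ P.parts ∧ (B.subtype p).Nonempty} := by
  rintro B₁ ⟨hB₁, t, ht⟩ B₂ ⟨hB₂, -⟩ h
  exact P.eq_of_mem_parts hB₁ hB₂ (Finset.mem_subtype.mp ht)
    (Finset.mem_subtype.mp (h ▸ ht : t ∈ B₂.subtype p))

variable {P} {D : Finset ι} {P' : Finpartition (Finset.univ : Finset {a // a ∉ D})}
  {M : Type*} [CommMonoid M]

theorem prod_filter_parts_subtype
    (hP' : P'.parts = (P.parts.image (fun B => Finset.subtype (fun a => a ∉ D) B)).filter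
      (fun s => s.Nonempty)) (h : Finset {a // a ∉ D} → M) :
    ∏ B ∈ P.parts with (B.subtype (· ∉ D)).Nonempty, h (B.subtype (· ∉ D))
      = ∏ B' ∈ P'.parts, h B' := by
  rw [hP', Finset.filter_image, Finset.prod_image fun B₁ hB₁ B₂ hB₂ =>
    P.injOn_subtype (· ∉ D) (Finset.mem_filter.mp hB₁) (Finset.mem_filter.mp hB₂)]

theorem prod_parts_subtype
    (hP' : P'.parts = (P.parts.image (fun B => Finset.subtype (fun a => a ∉ D) B)).filter
      (fun s => s.Nonempty)) (h : Finset {a // a ∉ D} → M) (h_empty : h ∅ = 1) :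
    ∏ B ∈ P.parts, h (B.subtype (· ∉ D)) = ∏ B' ∈ P'.parts, h B' := by
  rw [← prod_filter_parts_subtype hP', Finset.prod_filter_of_ne]
  exact fun B _ hB => Finset.nonempty_iff_ne_empty.mpr fun h0 => hB (h0 ▸ h_empty)

end Restriction

namespace GeomEnt

section ProductStates

variable {ι : Type} [Fintype ι] [DecidableEq ι]

/- `qInner` sums over the `Fintype` instance built from classical decidable equality; `congr!`
identifies it with the one built from `[DecidableEq ι]`. -/
theorem qInner_eq_star_dotProduct (φ ψ : (ι → ZMod 2) → ℂ) : qInner φ ψ = star φ ⬝ᵥ ψ := by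
  unfold qInner dotProduct
  congr!

theorem qInner_mul_left (c : ℂ) (φ ψ : (ι → ZMod 2) → ℂ) :
    qInner (fun x => c * φ x) ψ = star c * qInner φ ψ := by
  simp [qInner_eq_star_dotProduct, ← smul_eq_mul, ← Pi.smul_def, star_smul]

theorem qInner_mulVec_right (U : Matrix (ι → ZMod 2) (ι → ZMod 2) ℂ) (φ ψ : (ι → ZMod 2) → ℂ) :
    qInner φ (U *ᵥ ψ) = qInner (Uᴴ *ᵥ φ) ψ := by
  rw [qInner_eq_star_dotProduct, qInner_eq_star_dotProduct, star_mulVec,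
    conjTranspose_conjTranspose, dotProduct_mulVec]

theorem qInner_mulVec_mulVec {U : Matrix (ι → ZMod 2) (ι → ZMod 2) ℂ}
    (hU : U ∈ unitaryGroup (ι → ZMod 2) ℂ) (φ ψ : (ι → ZMod 2) → ℂ) :
    qInner (U *ᵥ φ) (U *ᵥ ψ) = qInner φ ψ := by
  rw [qInner_eq_star_dotProduct, qInner_eq_star_dotProduct, star_mulVec_dotProduct_mulVec hU]

theorem IsBlockProductState.norm_le_one {P : Finpartition (Finset.univ : Finset ι)}
    {Φ : (ι → ZMod 2) → ℂ} (hΦ : IsBlockProductState P Φ) (x : ι → ZMod 2) : ‖Φ x‖ ≤ 1 := by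
  obtain ⟨φ, hφ, hΦ⟩ := hΦ
  rw [hΦ x, norm_prod]
  exact Finset.prod_le_one (fun _ _ => norm_nonneg _)
    fun B hB => norm_le_one_of_sum_norm_sq_le_one (hφ B hB).le _

variable (P : Finpartition (Finset.univ : Finset ι))

theorem exists_isBlockProductState : ∃ Φ, IsBlockProductState P Φ := by
  choose φ hφ using fun B : Finset ι => exists_sum_norm_sq_eq_one (n := B → ZMod 2)
  exact ⟨_, φ, fun B _ => hφ B, fun _ => rfl⟩

theorem bddAbove_norm_qInner (ψ : (ι → ZMod 2) → ℂ) :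
    BddAbove {r | ∃ Φ, IsBlockProductState P Φ ∧ r = ‖qInner Φ ψ‖} := by
  refine ⟨∑ x, ‖ψ x‖, ?_⟩
  rintro _ ⟨Φ, hΦ, rfl⟩
  rw [qInner_eq_star_dotProduct]
  refine (norm_sum_le _ _).trans (Finset.sum_le_sum fun x _ => ?_)
  rw [norm_mul, Pi.star_apply, norm_star]
  exact mul_le_of_le_one_left (norm_nonneg _) (hΦ.norm_le_one x)

theorem norm_qInner_le_lambdaMaxP {Φ : (ι → ZMod 2) → ℂ} (hΦ : IsBlockProductState P Φ)
    (ψ : (ι → ZMod 2) → ℂ) : ‖qInner Φ ψ‖ ≤ LambdaMaxP P ψ :=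
  le_csSup (bddAbove_norm_qInner P ψ) ⟨Φ, hΦ, rfl⟩

theorem lambdaMaxP_le_of_forall_exists {κ : Type} [Fintype κ] [DecidableEq κ]
    {Q : Finpartition (Finset.univ : Finset κ)} {ψ : (ι → ZMod 2) → ℂ} {χ : (κ → ZMod 2) → ℂ}
    (h : ∀ Φ, IsBlockProductState P Φ →
      ∃ Φ', IsBlockProductState Q Φ' ∧ ‖qInner Φ ψ‖ ≤ ‖qInner Φ' χ‖) :
    LambdaMaxP P ψ ≤ LambdaMaxP Q χ := by
  obtain ⟨Φ₀, hΦ₀⟩ := exists_isBlockProductState P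
  refine csSup_le ⟨_, Φ₀, hΦ₀, rfl⟩ ?_
  rintro _ ⟨Φ, hΦ, rfl⟩
  obtain ⟨Φ', hΦ', hle⟩ := h Φ hΦ
  exact hle.trans (norm_qInner_le_lambdaMaxP Q hΦ' χ)

theorem exists_prod_eq_mul_isBlockProductState (θ : (B : Finset ι) → (B → ZMod 2) → ℂ)
    (hθ : ∀ B ∈ P.parts, ∑ z, ‖θ B z‖ ^ 2 ≤ 1) :
    ∃ c : ℂ, ‖c‖ ≤ 1 ∧ ∃ Φ, IsBlockProductState P Φ ∧
      ∀ v, ∏ B ∈ P.parts, θ B (fun a => v a) = c * Φ v := by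
  choose g hg hθg using fun B => exists_sum_norm_sq_eq_one_and_eq_sqrt_mul (θ B)
  refine ⟨∏ B ∈ P.parts, (√(∑ z, ‖θ B z‖ ^ 2) : ℂ), ?_, _, ⟨g, fun B _ => hg B, fun _ => rfl⟩,
    fun v => (Finset.prod_congr rfl fun B _ => hθg B _).trans Finset.prod_mul_distrib⟩
  rw [norm_prod]
  refine Finset.prod_le_one (fun _ _ => norm_nonneg _) fun B hB => ?_
  rw [Complex.norm_real, Real.norm_of_nonneg (Real.sqrt_nonneg _), Real.sqrt_le_one]
  exact hθ B hB

end ProductStates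

section BlockLocalUnitaries

variable {ι : Type} [Fintype ι] [DecidableEq ι] {P : Finpartition (Finset.univ : Finset ι)}
  {U : Matrix (ι → ZMod 2) (ι → ZMod 2) ℂ}
  {V : (B : Finset ι) → Matrix (B → ZMod 2) (B → ZMod 2) ℂ}

theorem IsBlockProductState.mulVec
    (hV : ∀ B ∈ P.parts, V B ∈ unitaryGroup (B → ZMod 2) ℂ)
    (hUV : ∀ x y, U x y = ∏ B ∈ P.parts, V B (fun a => x a) (fun a => y a))
    {Φ : (ι → ZMod 2) → ℂ} (hΦ : IsBlockProductState P Φ) : IsBlockProductState P (U *ᵥ Φ) := by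
  obtain ⟨φ, hφ, hΦ⟩ := hΦ
  refine ⟨fun B => V B *ᵥ φ B, fun B hB => (sum_norm_sq_mulVec (hV B hB) _).trans (hφ B hB),
    fun x => ?_⟩
  calc (U *ᵥ Φ) x = ∑ y, U x y * Φ y := rfl
    _ = ∑ y : ι → ZMod 2, ∏ B ∈ P.parts, V B (fun a => x a) (fun a => y a) * φ B (fun a => y a) :=
        Finset.sum_congr rfl fun y _ => by rw [hUV, hΦ, Finset.prod_mul_distrib]
    _ = ∏ B ∈ P.parts, ∑ w, V B (fun a => x a) w * φ B w :=
        sum_prod_eq_prod_sum_of_cover P.parts id (fun i => P.existsUnique_mem (Finset.mem_univ i))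
          fun B w => V B (fun a => x a) w * φ B w
    _ = ∏ B ∈ P.parts, (V B *ᵥ φ B) (fun a => x a) := rfl

theorem conjTranspose_apply_eq_prod
    (hUV : ∀ x y, U x y = ∏ B ∈ P.parts, V B (fun a => x a) (fun a => y a)) (x y : ι → ZMod 2) :
    Uᴴ x y = ∏ B ∈ P.parts, (V B)ᴴ (fun a => x a) (fun a => y a) := by
  simp [conjTranspose_apply, hUV]

theorem lambdaMaxP_mulVec (hU : U ∈ unitaryGroup (ι → ZMod 2) ℂ)
    (hV : ∀ B ∈ P.parts, V B ∈ unitaryGroup (B → ZMod 2) ℂ)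
    (hUV : ∀ x y, U x y = ∏ B ∈ P.parts, V B (fun a => x a) (fun a => y a))
    (ψ : (ι → ZMod 2) → ℂ) : LambdaMaxP P (U *ᵥ ψ) = LambdaMaxP P ψ := by
  refine le_antisymm (lambdaMaxP_le_of_forall_exists P fun Φ hΦ => ⟨Uᴴ *ᵥ Φ, ?_, ?_⟩)
    (lambdaMaxP_le_of_forall_exists P fun Φ hΦ => ⟨U *ᵥ Φ, hΦ.mulVec hV hUV, ?_⟩)
  · exact hΦ.mulVec (fun B hB => Unitary.star_mem (hV B hB)) (conjTranspose_apply_eq_prod hUV)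
  · rw [qInner_mulVec_right]
  · rw [qInner_mulVec_mulVec hU]

end BlockLocalUnitaries

section Disentangling

variable {ι : Type} [Fintype ι] [DecidableEq ι] {P : Finpartition (Finset.univ : Finset ι)}
  {D : Finset ι} {P' : Finpartition (Finset.univ : Finset {a // a ∉ D})}

theorem qInner_eq_qInner_partialInner (Φ : (ι → ZMod 2) → ℂ) {a : (D → ZMod 2) → ℂ}
    {b : ({a // a ∉ D} → ZMod 2) → ℂ} {χ : (ι → ZMod 2) → ℂ}
    (hχ : ∀ x, χ x = a (fun i => x i) * b (fun i => x i)) :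
    qInner Φ χ = qInner (partialInner D a Φ) b := by
  rw [qInner_eq_star_dotProduct, qInner_eq_star_dotProduct]
  simp only [dotProduct, partialInner, Pi.star_apply, sum_eq_sum_sum_glue D, hχ,
    restrict_glue_mem, restrict_glue_notMem, star_sum, star_mul', star_star, Finset.sum_mul]
  rw [Finset.sum_comm]
  exact Finset.sum_congr rfl fun v _ => Finset.sum_congr rfl fun u _ => by ring

theorem partialInner_eq_prod {Φ : (ι → ZMod 2) → ℂ} {φ : (B : Finset ι) → (B → ZMod 2) → ℂ}
    (hΦ : ∀ x, Φ x = ∏ B ∈ P.parts, φ B (fun a => x a)) {a : (D → ZMod 2) → ℂ}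
    {aB : (B : Finset ι) → (B.subtype (· ∈ D) → ZMod 2) → ℂ}
    (ha : ∀ u, a u = ∏ B ∈ P.parts, aB B (fun j => u j)) (v : {a // a ∉ D} → ZMod 2) :
    partialInner D a Φ v
      = ∏ B ∈ P.parts, ∑ w, star (aB B w) * φ B ((blockSplit D B).symm (w, fun t => v t)) :=
  calc partialInner D a Φ v
      = ∑ u : D → ZMod 2, ∏ B ∈ P.parts,
          star (aB B (fun j => u j)) * φ B ((blockSplit D B).symm (fun j => u j, fun t => v t)) :=
        Finset.sum_congr rfl fun u _ => by
          rw [ha, hΦ, star_prod, ← Finset.prod_mul_distrib]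
          simp only [restrict_glue_eq_blockSplit_symm]
    _ = _ := sum_prod_eq_prod_sum_of_cover P.parts (fun B => B.subtype (· ∈ D))
        (P.existsUnique_mem_subtype_parts _)
        fun B w => star (aB B w) * φ B ((blockSplit D B).symm (w, fun t => v t))

theorem sum_norm_sq_eq_one_of_eq_prod {a : (D → ZMod 2) → ℂ}
    {aB : (B : Finset ι) → (B.subtype (· ∈ D) → ZMod 2) → ℂ}
    (haB : ∀ B ∈ P.parts, ∑ w, ‖aB B w‖ ^ 2 = 1)
    (ha : ∀ u, a u = ∏ B ∈ P.parts, aB B (fun j => u j)) : ∑ u, ‖a u‖ ^ 2 = 1 := by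
  simp_rw [ha, norm_prod, ← Finset.prod_pow]
  rw [sum_prod_eq_prod_sum_of_cover P.parts (fun B => B.subtype (· ∈ D))
    (P.existsUnique_mem_subtype_parts _) fun B w => ‖aB B w‖ ^ 2]
  exact Finset.prod_eq_one haB

/- Blocks of `P` contained in `D` carry no variable of the complement: their factors are
constants of norm at most one. -/
theorem exists_prod_subtype_eq_mul_isBlockProductState
    (hP' : P'.parts = (P.parts.image (fun B => Finset.subtype (fun a => a ∉ D) B)).filter
      (fun s => s.Nonempty))
    (θ : (B : Finset ι) → (B.subtype (· ∉ D) → ZMod 2) → ℂ)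
    (hθ : ∀ B ∈ P.parts, ∑ z, ‖θ B z‖ ^ 2 ≤ 1) :
    ∃ c : ℂ, ‖c‖ ≤ 1 ∧ ∃ Φ', IsBlockProductState P' Φ' ∧
      ∀ v, ∏ B ∈ P.parts, θ B (fun t => v t) = c * Φ' v := by
  obtain ⟨θ', hθ'⟩ := (P.injOn_subtype (· ∉ D)).exists_dependent_extend
    (F := fun B' : Finset {a // a ∉ D} => (B' → ZMod 2) → ℂ) θ
  obtain ⟨c, hc, Φ', hΦ', hprod⟩ := exists_prod_eq_mul_isBlockProductState P' θ' fun B' hB' => by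
    rw [hP', Finset.mem_filter, Finset.mem_image] at hB'
    obtain ⟨⟨B, hB, rfl⟩, hne⟩ := hB'
    rw [hθ' B ⟨hB, hne⟩]
    exact hθ B hB
  refine ⟨(∏ B ∈ P.parts with ¬(B.subtype (· ∉ D)).Nonempty, θ B fun _ => 0) * c, ?_, Φ', hΦ',
    fun v => ?_⟩
  · rw [norm_mul, norm_prod]
    exact mul_le_one₀ (Finset.prod_le_one (fun _ _ => norm_nonneg _) fun B hB =>
      norm_le_one_of_sum_norm_sq_le_one (hθ B (Finset.mem_filter.mp hB).1) _) (norm_nonneg _) hc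
  · rw [← Finset.prod_filter_not_mul_prod_filter P.parts (fun B => (B.subtype (· ∉ D)).Nonempty),
      mul_assoc, ← hprod, ← prod_filter_parts_subtype hP' fun B' => θ' B' fun t => v t]
    congr 1
    · refine Finset.prod_congr rfl fun B hB => congrArg (θ B) (funext fun t => ?_)
      exact absurd ⟨t.1, t.2⟩ (Finset.mem_filter.mp hB).2
    · exact Finset.prod_congr rfl fun B hB => congrFun (hθ' B (Finset.mem_filter.mp hB)).symm _

theorem IsBlockProductState.tensor
    (hP' : P'.parts = (P.parts.image (fun B => Finset.subtype (fun a => a ∉ D) B)).filter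
      (fun s => s.Nonempty))
    {a : (D → ZMod 2) → ℂ} {aB : (B : Finset ι) → (B.subtype (· ∈ D) → ZMod 2) → ℂ}
    (haB : ∀ B ∈ P.parts, ∑ w, ‖aB B w‖ ^ 2 = 1)
    (ha : ∀ u, a u = ∏ B ∈ P.parts, aB B (fun j => u j))
    {Φ' : ({a // a ∉ D} → ZMod 2) → ℂ} (hΦ' : IsBlockProductState P' Φ') :
    IsBlockProductState P (fun x => a (fun i => x i) * Φ' (fun i => x i)) := by
  obtain ⟨φ', hφ', hΦ'⟩ := hΦ'
  let φ'' : (B' : Finset {a // a ∉ D}) → (B' → ZMod 2) → ℂ :=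
    fun B' => if B' ∈ P'.parts then φ' B' else fun _ => 1
  have hφ'' : ∀ B ∈ P.parts, ∑ z, ‖φ'' (B.subtype (· ∉ D)) z‖ ^ 2 = 1 := by
    intro B hB
    by_cases hne : (B.subtype (· ∉ D)).Nonempty
    · have hmem : B.subtype (· ∉ D) ∈ P'.parts := by
        rw [hP']
        exact Finset.mem_filter.mpr ⟨Finset.mem_image_of_mem _ hB, hne⟩
      simpa [φ'', hmem] using hφ' _ hmem
    · generalize B.subtype (· ∉ D) = B' at hne ⊢
      obtain rfl := Finset.not_nonempty_iff_eq_empty.mp hne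
      simp [φ'', P'.empty_notMem_parts]
  refine ⟨fun B y => aB B (blockSplit D B y).1 * φ'' (B.subtype (· ∉ D)) (blockSplit D B y).2,
    fun B hB => ?_, fun x => ?_⟩
  · rw [sum_eq_sum_sum_blockSplit_symm D B]
    simp only [Equiv.apply_symm_apply, norm_mul, mul_pow, ← Finset.mul_sum, haB B hB, hφ'' B hB,
      mul_one]
  · dsimp only
    rw [Finset.prod_mul_distrib, ha, hΦ']
    congr 1
    calc ∏ B' ∈ P'.parts, φ' B' (fun t => x t)
        = ∏ B' ∈ P'.parts, φ'' B' (fun t => x t) :=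
          Finset.prod_congr rfl fun B' hB' => by simp [φ'', hB']
      _ = ∏ B ∈ P.parts, φ'' (B.subtype (· ∉ D)) (fun t => x t) :=
          (prod_parts_subtype hP' (fun B' => φ'' B' fun t => x t)
            (by simp [φ'', P'.empty_notMem_parts])).symm

theorem lambdaMaxP_eq_of_eq_mul
    (hP' : P'.parts = (P.parts.image (fun B => Finset.subtype (fun a => a ∉ D) B)).filter
      (fun s => s.Nonempty))
    {a : (D → ZMod 2) → ℂ} {aB : (B : Finset ι) → (B.subtype (· ∈ D) → ZMod 2) → ℂ}
    (haB : ∀ B ∈ P.parts, ∑ w, ‖aB B w‖ ^ 2 = 1)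
    (ha : ∀ u, a u = ∏ B ∈ P.parts, aB B (fun j => u j))
    {b : ({a // a ∉ D} → ZMod 2) → ℂ} {χ : (ι → ZMod 2) → ℂ}
    (hχ : ∀ x, χ x = a (fun i => x i) * b (fun i => x i)) :
    LambdaMaxP P χ = LambdaMaxP P' b := by
  refine le_antisymm (lambdaMaxP_le_of_forall_exists P fun Φ hΦ => ?_)
    (lambdaMaxP_le_of_forall_exists P' fun Φ' hΦ' => ⟨_, hΦ'.tensor hP' haB ha, ?_⟩)
  · obtain ⟨φ, hφ, hΦ⟩ := hΦ
    obtain ⟨c, hc, Φ', hΦ', hprod⟩ := exists_prod_subtype_eq_mul_isBlockProductState hP'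
      (fun B z => ∑ w, star (aB B w) * φ B ((blockSplit D B).symm (w, z)))
      fun B hB => sum_norm_sq_contract_blockSplit_le D (hφ B hB) (haB B hB)
    have hpartial : partialInner D a Φ = fun v => c * Φ' v :=
      funext fun v => (partialInner_eq_prod hΦ ha v).trans (hprod v)
    refine ⟨Φ', hΦ', ?_⟩
    rw [qInner_eq_qInner_partialInner Φ hχ, hpartial, qInner_mul_left, norm_mul, norm_star]
    exact mul_le_of_le_one_left (norm_nonneg _) hc
  · rw [qInner_eq_qInner_partialInner _ hχ,
      partialInner_mul D (sum_norm_sq_eq_one_of_eq_prod haB ha)]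

end Disentangling

theorem geometric_entanglement_block_disentangling_general
    {ι : Type} [Fintype ι] [DecidableEq ι]
    (P : Finpartition (Finset.univ : Finset ι))
    (ψ : (ι → ZMod 2) → ℂ)
    (M : (ι → ZMod 2) → (ι → ZMod 2) → ℂ)
    (hM : Matrix.of M ∈ Matrix.unitaryGroup (ι → ZMod 2) ℂ)
    (UB : (B : Finset ι) → ({ a : ι // a ∈ B } → ZMod 2) → ({ a : ι // a ∈ B } → ZMod 2) → ℂ)
    (hUB : ∀ B ∈ P.parts,
      Matrix.of (UB B) ∈ Matrix.unitaryGroup ({ a : ι // a ∈ B } → ZMod 2) ℂ)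
    (hfact : ∀ x y, M x y = ∏ B ∈ P.parts, UB B (fun a => x a.1) (fun a => y a.1))
    (Uψ : (ι → ZMod 2) → ℂ)
    (hUψ : ∀ x, Uψ x = ∑ y : ι → ZMod 2, M x y * ψ y) :
    LambdaMaxP P Uψ = LambdaMaxP P ψ ∧
    (∀ (D : Finset ι) (e : ({ a : ι // a ∈ D } → ZMod 2) → ℂ)
        (ψt : ({ a : ι // a ∉ D } → ZMod 2) → ℂ)
        (P' : Finpartition (Finset.univ : Finset { a : ι // a ∉ D })),
      (∃ ε : { a : ι // a ∈ D } → ZMod 2 → ℂ,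
          (∀ i, ‖ε i 0‖ ^ 2 + ‖ε i 1‖ ^ 2 = 1) ∧
          ∀ y, e y = ∏ i, ε i (y i)) →
      IsState ψt →
      (∀ x, Uψ x = e (fun a => x a.1) * ψt (fun a => x a.1)) →
      P'.parts =
        (P.parts.image (fun B => Finset.subtype (fun a => a ∉ D) B)).filter
          (fun s => s.Nonempty) →
      LambdaMaxP P ψ = LambdaMaxP P' ψt) := by
  have hlocal : LambdaMaxP P Uψ = LambdaMaxP P ψ :=
    funext hUψ ▸ lambdaMaxP_mulVec (V := fun B => Matrix.of (UB B)) hM hUB hfact ψ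
  refine ⟨hlocal, fun D e ψt P' ⟨ε, hε, he⟩ _ hUψe hP' => hlocal ▸ ?_⟩
  exact lambdaMaxP_eq_of_eq_mul hP' (aB := fun B w => ∏ j : B.subtype (· ∈ D), ε j (w j))
    (fun B _ => sum_norm_sq_prod_eq_one _ fun j => hε j)
    (fun u => (he u).trans (prod_eq_prod_prod_of_cover P.parts _
      (P.existsUnique_mem_subtype_parts _) _)) hUψe

/-- (i) a unitary factorizing as a tensor product of unitaries acting
inside the blocks of `P` does not change the maximal block overlap; (ii) if moreover it
disentangles the qubits of a subset `D` (leaving a product of single-qubit unit vectors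
on `D` tensored with a state `ψt` on the complement), then the maximal block overlap of
`ψ` with respect to `P` equals that of `ψt` with respect to the induced partition `P'`
of the remaining qubits. -/
theorem geometric_entanglement_block_disentangling
    {ι : Type} [Fintype ι] [DecidableEq ι]
    (P : Finpartition (Finset.univ : Finset ι))
    (ψ : (ι → ZMod 2) → ℂ) (hψ : IsState ψ)
    (M : (ι → ZMod 2) → (ι → ZMod 2) → ℂ)
    (hM : Matrix.of M ∈ Matrix.unitaryGroup (ι → ZMod 2) ℂ)
    (UB : (B : Finset ι) → ({ a : ι // a ∈ B } → ZMod 2) → ({ a : ι // a ∈ B } → ZMod 2) → ℂ)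
    (hUB : ∀ B ∈ P.parts,
      Matrix.of (UB B) ∈ Matrix.unitaryGroup ({ a : ι // a ∈ B } → ZMod 2) ℂ)
    (hfact : ∀ x y, M x y = ∏ B ∈ P.parts, UB B (fun a => x a.1) (fun a => y a.1))
    (Uψ : (ι → ZMod 2) → ℂ)
    (hUψ : ∀ x, Uψ x = ∑ y : ι → ZMod 2, M x y * ψ y) :
    LambdaMaxP P Uψ = LambdaMaxP P ψ ∧
    (∀ (D : Finset ι) (e : ({ a : ι // a ∈ D } → ZMod 2) → ℂ)
        (ψt : ({ a : ι // a ∉ D } → ZMod 2) → ℂ)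
        (P' : Finpartition (Finset.univ : Finset { a : ι // a ∉ D })),
      (∃ ε : { a : ι // a ∈ D } → ZMod 2 → ℂ,
          (∀ i, ‖ε i 0‖ ^ 2 + ‖ε i 1‖ ^ 2 = 1) ∧
          ∀ y, e y = ∏ i, ε i (y i)) →
      IsState ψt →
      (∀ x, Uψ x = e (fun a => x a.1) * ψt (fun a => x a.1)) →
      P'.parts =
        (P.parts.image (fun B => Finset.subtype (fun a => a ∉ D) B)).filter
          (fun s => s.Nonempty) →
      LambdaMaxP P ψ = LambdaMaxP P' ψt) :=
  geometric_entanglement_block_disentangling_general P ψ M hM UB hUB hfact Uψ hUψ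

end GeomEnt
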